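/- Let T > 0, r > q ≥ 0, σ > 0, h ∈ ℝ, and let G ∈ (0,1) be the unique solution of ln G = qT/G − rT. With α^g(t,u,x) = (t/u)·ln x − ((u² − t²)/(2u))·(r − q + σ²/2) and β^g(t,u) = (σ/(u·√3))·√(u³ − t³), define v̂(t,x) = −e^{−q(T−t)} · e^{α^g(t,T,x) + β^g(t,T)²/2} · Φ(−α^g(t,T,x)/β^g(t,T) − β^g(t,T)) · (t/(T·x)) for 0 < t < T and x > 0. Then lim_{τ→0⁺} (1 + v̂(T−τ, G·(1 + hσ·√τ)))/τ = q/G + 1/T. -/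

import Mathlib

open MeasureTheory Real Filter Topology

/-- The standard normal cumulative distribution function. -/
noncomputable def stdNormalCDF (x : ℝ) : ℝ :=
  ∫ s in Set.Iic x, (Real.sqrt (2 * Real.pi))⁻¹ * Real.exp (-s ^ 2 / 2)

/-- `α^g(t,u,x) = (t/u)·ln x − ((u²−t²)/(2u))·(r−q+σ²/2)`. -/
noncomputable def alphaG (r q σ t u x : ℝ) : ℝ :=
  (t / u) * Real.log x - ((u ^ 2 - t ^ 2) / (2 * u)) * (r - q + σ ^ 2 / 2)

/-- `β^g(t,u) = (σ/(u√3))·√(u³−t³)`. -/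
noncomputable def betaG (σ t u : ℝ) : ℝ :=
  (σ / (u * Real.sqrt 3)) * Real.sqrt (u ^ 3 - t ^ 3)

/-- `v̂(t,x) = −e^{−q(T−t)}·e^{α^g(t,T,x)+β^g(t,T)²/2}·
     Φ(−α^g(t,T,x)/β^g(t,T) − β^g(t,T))·(t/(T·x))`. -/
noncomputable def vHatG (r q σ T t x : ℝ) : ℝ :=
  -Real.exp (-q * (T - t)) * Real.exp (alphaG r q σ t T x + (betaG σ t T) ^ 2 / 2)
    * stdNormalCDF (-(alphaG r q σ t T x) / betaG σ t T - betaG σ t T)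
    * (t / (T * x))

/-!
Write `v̂(T - τ, x) = -e^{M(τ)} Φ(z(τ))`, so that `1 + v̂ = (1 - e^M) + e^M (1 - Φ(z))`.
The exponent satisfies `M(τ)/τ → -r - (ln G + 1)/T`, which the equation defining `G` turns into
`-(q/G + 1/T)`; hence `(1 - e^M)/τ → q/G + 1/T`. Because `ln G < 0`, the argument `z` blows up
like `1/√τ`, and the Gaussian tail `1 - Φ(z)` is exponentially small, so it contributes nothing.
-/

open ProbabilityTheory

lemma stdNormalCDF_eq_integral_gaussianPDFReal (x : ℝ) :
    stdNormalCDF x = ∫ s in Set.Iic x, gaussianPDFReal 0 1 s := by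
  simp [stdNormalCDF, gaussianPDFReal]

lemma one_sub_stdNormalCDF (x : ℝ) :
    1 - stdNormalCDF x = ∫ s in Set.Ioi x, gaussianPDFReal 0 1 s := by
  rw [← integral_gaussianPDFReal_eq_one 0 one_ne_zero, stdNormalCDF_eq_integral_gaussianPDFReal,
    ← intervalIntegral.integral_Iic_add_Ioi (integrable_gaussianPDFReal 0 1).integrableOn
      (integrable_gaussianPDFReal 0 1).integrableOn, add_sub_cancel_left]

lemma stdNormalCDF_le_one (x : ℝ) : stdNormalCDF x ≤ 1 := by
  have := setIntegral_nonneg (μ := volume) (measurableSet_Ioi (a := x))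
    fun s _ => gaussianPDFReal_nonneg 0 1 s
  linarith [one_sub_stdNormalCDF x]

lemma one_sub_stdNormalCDF_le {w : ℝ} (hw : 1 ≤ w) :
    1 - stdNormalCDF w ≤ 2 * exp (-w / 2) := by
  have hexp : IntegrableOn (fun s : ℝ => exp (-2⁻¹ * s)) (Set.Ioi w) :=
    exp_neg_integrableOn_Ioi w (by norm_num)
  have hcoeff : (√(2 * π))⁻¹ ≤ 1 :=
    inv_le_one_of_one_le₀ (one_le_sqrt.2 (by nlinarith [pi_gt_three]))
  calc 1 - stdNormalCDF w = ∫ s in Set.Ioi w, gaussianPDFReal 0 1 s := one_sub_stdNormalCDF w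
    _ ≤ ∫ s in Set.Ioi w, exp (-2⁻¹ * s) := by
      refine setIntegral_mono_on (integrable_gaussianPDFReal 0 1).integrableOn hexp
        measurableSet_Ioi fun s hs => ?_
      have hs1 : 1 ≤ s := hw.trans (le_of_lt hs)
      calc gaussianPDFReal 0 1 s = (√(2 * π))⁻¹ * exp (-s ^ 2 / 2) := by
            simp [gaussianPDFReal]
        _ ≤ 1 * exp (-2⁻¹ * s) := by gcongr; nlinarith
        _ = exp (-2⁻¹ * s) := one_mul _
    _ = 2 * exp (-w / 2) := by
      rw [integral_exp_mul_Ioi (by norm_num)]; ring_nf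

lemma tendsto_one_sub_stdNormalCDF_div_sq {α : Type*} {l : Filter α} {b z : α → ℝ} {k : ℝ}
    (hb : Tendsto b l (𝓝[>] 0)) (hk : 0 < k) (hzb : Tendsto (fun a => z a * b a) l (𝓝 k)) :
    Tendsto (fun a => (1 - stdNormalCDF (z a)) / b a ^ 2) l (𝓝 0) := by
  have hb_pos : ∀ᶠ a in l, 0 < b a := (tendsto_nhdsWithin_iff.1 hb).2
  have hu : Tendsto (fun a => k / 4 * (b a)⁻¹) l atTop :=
    (tendsto_inv_nhdsGT_zero.comp hb).const_mul_atTop (by positivity)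
  have hz : ∀ᶠ a in l, 2 * (k / 4 * (b a)⁻¹) ≤ z a := by
    filter_upwards [hzb.eventually (lt_mem_nhds (half_lt_self hk)), hb_pos] with a hza hba
    rw [← div_lt_iff₀ hba] at hza
    calc 2 * (k / 4 * (b a)⁻¹) = k / 2 / b a := by ring
      _ ≤ z a := hza.le
  have hbound : ∀ᶠ a in l, (1 - stdNormalCDF (z a)) / b a ^ 2
      ≤ 2 * (4 / k) ^ 2 * ((k / 4 * (b a)⁻¹) ^ 2 * exp (-(k / 4 * (b a)⁻¹))) := by
    filter_upwards [hz, hu.eventually_ge_atTop 1, hb_pos] with a hza hua hba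
    have htail := one_sub_stdNormalCDF_le (by linarith : 1 ≤ z a)
    have hexp : exp (-z a / 2) ≤ exp (-(k / 4 * (b a)⁻¹)) := exp_le_exp.2 (by linarith)
    calc (1 - stdNormalCDF (z a)) / b a ^ 2 ≤ 2 * exp (-(k / 4 * (b a)⁻¹)) / b a ^ 2 := by
          gcongr; linarith
      _ = _ := by field_simp
  have hlim : Tendsto (fun a => 2 * (4 / k) ^ 2 *
      ((k / 4 * (b a)⁻¹) ^ 2 * exp (-(k / 4 * (b a)⁻¹)))) l (𝓝 0) := by
    simpa using ((tendsto_pow_mul_exp_neg_atTop_nhds_zero 2).comp hu).const_mul (2 * (4 / k) ^ 2)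
  refine squeeze_zero' ?_ hbound hlim
  filter_upwards with a
  have := stdNormalCDF_le_one (z a)
  exact div_nonneg (by linarith) (sq_nonneg _)

lemma tendsto_exp_sub_one_div {α : Type*} {l : Filter α} {f g : α → ℝ} {L : ℝ}
    (hf : Tendsto f l (𝓝 0)) (hfg : Tendsto (fun a => f a / g a) l (𝓝 L)) :
    Tendsto (fun a => (exp (f a) - 1) / g a) l (𝓝 L) := by
  have herr : Tendsto (fun a => (exp (f a) - 1 - f a) / g a) l (𝓝 0) := by
    have hprod : Tendsto (fun a => |f a| * |f a / g a|) l (𝓝 0) := by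
      simpa using hf.abs.mul hfg.abs
    refine squeeze_zero_norm' ?_ hprod
    filter_upwards [hf.eventually (Metric.closedBall_mem_nhds 0 one_pos)] with a ha
    rw [dist_zero_right, Real.norm_eq_abs] at ha
    calc ‖(exp (f a) - 1 - f a) / g a‖ = |exp (f a) - 1 - f a| / |g a| := by
          rw [Real.norm_eq_abs, abs_div]
      _ ≤ f a ^ 2 / |g a| := by gcongr; exact abs_exp_sub_one_sub_id_le ha
      _ = |f a| * |f a / g a| := by rw [abs_div, ← sq_abs]; ring
  simpa [sub_div] using herr.add hfg

lemma tendsto_log_one_add_mul_div (c : ℝ) :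
    Tendsto (fun τ => log (1 + c * τ) / τ) (𝓝[≠] 0) (𝓝 c) := by
  have hd : HasDerivAt (fun τ => log (1 + c * τ)) c 0 := by
    simpa using (((hasDerivAt_id (0 : ℝ)).const_mul c).const_add 1).log (by simp)
  refine hd.tendsto_slope.congr fun τ => ?_
  simp [slope_def_field]

lemma betaG_sq (σ : ℝ) {t u : ℝ} (ht : 0 ≤ t) (htu : t ≤ u) :
    betaG σ t u ^ 2 = σ ^ 2 * (u ^ 3 - t ^ 3) / (3 * u ^ 2) := by
  rw [betaG, mul_pow, div_pow, mul_pow, sq_sqrt (sub_nonneg.2 (pow_le_pow_left₀ ht htu 3)),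
    sq_sqrt zero_le_three]
  ring

lemma tendsto_betaG_sq_div (σ : ℝ) {T : ℝ} (hT : 0 < T) :
    Tendsto (fun τ => betaG σ (T - τ) T ^ 2 / τ) (𝓝[>] 0) (𝓝 (σ ^ 2)) := by
  have hpoly : Tendsto (fun τ : ℝ => σ ^ 2 * (3 * T ^ 2 - 3 * T * τ + τ ^ 2) / (3 * T ^ 2))
      (𝓝[>] 0) (𝓝 (σ ^ 2)) := by
    refine tendsto_nhdsWithin_of_tendsto_nhds ?_
    have hcont : Continuous fun τ : ℝ =>
        σ ^ 2 * (3 * T ^ 2 - 3 * T * τ + τ ^ 2) / (3 * T ^ 2) := by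
      fun_prop
    convert hcont.tendsto 0 using 2
    field_simp
    ring
  refine hpoly.congr' ?_
  filter_upwards [Ioo_mem_nhdsGT hT] with τ ⟨hτ, hτT⟩
  rw [betaG_sq σ (by linarith) (by linarith)]
  field_simp
  ring

lemma tendsto_betaG_nhdsGT {σ T : ℝ} (hσ : 0 < σ) (hT : 0 < T) :
    Tendsto (fun τ => betaG σ (T - τ) T) (𝓝[>] 0) (𝓝[>] 0) := by
  refine tendsto_nhdsWithin_iff.2 ⟨tendsto_nhdsWithin_of_tendsto_nhds ?_, ?_⟩
  · simpa [betaG] using (Continuous.tendsto (by unfold betaG; fun_prop) 0 :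
      Tendsto (fun τ => betaG σ (T - τ) T) (𝓝 0) _)
  · filter_upwards [Ioo_mem_nhdsGT hT] with τ ⟨hτ, hτT⟩
    have hcube : (T - τ) ^ 3 < T ^ 3 :=
      pow_lt_pow_left₀ (by linarith) (by linarith) three_ne_zero
    exact mul_pos (by positivity) (sqrt_pos.2 (sub_pos.2 hcube))

lemma tendsto_alphaG (r q σ : ℝ) {T G : ℝ} (hT : 0 < T) (hG : G ≠ 0) {x : ℝ → ℝ}
    (hx : Tendsto x (𝓝[>] 0) (𝓝 G)) :
    Tendsto (fun τ => alphaG r q σ (T - τ) T (x τ)) (𝓝[>] 0) (𝓝 (log G)) := by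
  have hTτ : Tendsto (fun τ => T - τ) (𝓝[>] 0) (𝓝 T) :=
    tendsto_nhdsWithin_of_tendsto_nhds ((continuous_sub_left T).tendsto' 0 T (sub_zero T))
  have hlim := ((hTτ.div_const T).mul ((continuousAt_log hG).tendsto.comp hx)).sub
    ((((tendsto_const_nhds (x := T ^ 2)).sub (hTτ.pow 2)).div_const (2 * T)).mul_const
      (r - q + σ ^ 2 / 2))
  simpa [alphaG, hT.ne'] using hlim

noncomputable def vHatLogWeight (r q σ T t x : ℝ) : ℝ :=
  -q * (T - t) + alphaG r q σ t T x + betaG σ t T ^ 2 / 2 + log (t / (T * x))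

lemma vHatG_eq_neg_exp_mul {r q σ T t x : ℝ} (hT : 0 < T) (ht : 0 < t) (hx : 0 < x) :
    vHatG r q σ T t x = -exp (vHatLogWeight r q σ T t x)
      * stdNormalCDF (-alphaG r q σ t T x / betaG σ t T - betaG σ t T) := by
  simp only [vHatG, vHatLogWeight, exp_add, exp_log (by positivity : 0 < t / (T * x))]
  ring

lemma vHatLogWeight_div_eq (r q σ : ℝ) {T τ x : ℝ} (hτ : 0 < τ) (hτT : τ < T)
    (hx : 0 < x) :
    vHatLogWeight r q σ T (T - τ) x / τ = -q - log x / T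
      - (2 * T - τ) / (2 * T) * (r - q + σ ^ 2 / 2) + betaG σ (T - τ) T ^ 2 / τ / 2
      + log (1 + -T⁻¹ * τ) / τ := by
  have hT : 0 < T := hτ.trans hτT
  have hlog : log ((T - τ) / (T * x)) = log (1 + -T⁻¹ * τ) - log x := by
    have hpos : 0 < 1 + -T⁻¹ * τ := by
      rw [neg_mul, ← sub_eq_add_neg, inv_mul_eq_div, sub_pos]
      exact (div_lt_one hT).2 hτT
    rw [← log_div hpos.ne' hx.ne']
    congr 1
    field_simp
    ring
  rw [vHatLogWeight, hlog, alphaG]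
  field_simp
  ring

lemma tendsto_vHatLogWeight_div (r q σ : ℝ) {T G : ℝ} (hT : 0 < T) (hG : G ≠ 0)
    {x : ℝ → ℝ} (hx : Tendsto x (𝓝[>] 0) (𝓝 G)) (hx_pos : ∀ᶠ τ in 𝓝[>] 0, 0 < x τ) :
    Tendsto (fun τ => vHatLogWeight r q σ T (T - τ) (x τ) / τ) (𝓝[>] 0)
      (𝓝 (-r - (log G + 1) / T)) := by
  have hid : Tendsto (fun τ : ℝ => τ) (𝓝[>] 0) (𝓝 0) :=
    tendsto_nhdsWithin_of_tendsto_nhds tendsto_id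
  have hlim := ((((tendsto_const_nhds (x := -q)).sub
    (((continuousAt_log hG).tendsto.comp hx).div_const T)).sub
    ((((tendsto_const_nhds (x := 2 * T)).sub hid).div_const (2 * T)).mul_const
      (r - q + σ ^ 2 / 2))).add ((tendsto_betaG_sq_div σ hT).div_const 2)).add
    ((tendsto_log_one_add_mul_div (-T⁻¹)).mono_left (nhdsGT_le_nhdsNE 0))
  have hval : -q - log G / T - (2 * T - 0) / (2 * T) * (r - q + σ ^ 2 / 2) + σ ^ 2 / 2 + -T⁻¹
      = -r - (log G + 1) / T := by
    field_simp
    ring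
  rw [hval] at hlim
  refine hlim.congr' ?_
  filter_upwards [Ioo_mem_nhdsGT hT, hx_pos] with τ ⟨hτ, hτT⟩ hxτ
  exact (vHatLogWeight_div_eq r q σ hτ hτT hxτ).symm

lemma tendsto_one_sub_stdNormalCDF_div (r q : ℝ) {σ T G : ℝ} (hσ : 0 < σ) (hT : 0 < T)
    (hG0 : 0 < G) (hG1 : G < 1) {x : ℝ → ℝ} (hx : Tendsto x (𝓝[>] 0) (𝓝 G)) :
    Tendsto (fun τ => (1 - stdNormalCDF
      (-alphaG r q σ (T - τ) T (x τ) / betaG σ (T - τ) T - betaG σ (T - τ) T)) / τ)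
      (𝓝[>] 0) (𝓝 0) := by
  have hβ := tendsto_betaG_nhdsGT hσ hT
  have hβ_pos : ∀ᶠ τ in 𝓝[>] 0, 0 < betaG σ (T - τ) T := (tendsto_nhdsWithin_iff.1 hβ).2
  -- `z β = -α - β² → -log G > 0`, so `z ≍ 1/β` and the Gaussian tail beats `β² ≍ τ`
  have hzβ : Tendsto (fun τ => (-alphaG r q σ (T - τ) T (x τ) / betaG σ (T - τ) T
      - betaG σ (T - τ) T) * betaG σ (T - τ) T) (𝓝[>] 0) (𝓝 (-log G)) := by
    have hlim := (tendsto_alphaG r q σ hT hG0.ne' hx).neg.sub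
      ((tendsto_nhds_of_tendsto_nhdsWithin hβ).pow 2)
    rw [zero_pow two_ne_zero, sub_zero] at hlim
    refine hlim.congr' ?_
    filter_upwards [hβ_pos] with τ hτ
    field_simp
  have hlim := (tendsto_one_sub_stdNormalCDF_div_sq hβ (neg_pos.2 (log_neg hG0 hG1)) hzβ).mul
      (tendsto_betaG_sq_div σ hT)
  rw [zero_mul] at hlim
  refine hlim.congr' ?_
  filter_upwards [hβ_pos] with τ hτ
  field_simp

theorem tendsto_one_add_vHatG_div_tau (r q σ T G h : ℝ) (hσ : 0 < σ) (hT : 0 < T)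
    (hG0 : 0 < G) (hG1 : G < 1)
    (hGeq : Real.log G = q * T / G - r * T) :
    Tendsto (fun τ : ℝ =>
        (1 + vHatG r q σ T (T - τ) (G * (1 + h * σ * Real.sqrt τ))) / τ)
      (𝓝[>] 0) (𝓝 (q / G + 1 / T)) := by
  set x : ℝ → ℝ := fun τ => G * (1 + h * σ * √τ)
  set M : ℝ → ℝ := fun τ => vHatLogWeight r q σ T (T - τ) (x τ)
  have hx : Tendsto x (𝓝[>] 0) (𝓝 G) := by
    have hcont : Continuous x := by fun_prop
    simpa [x] using tendsto_nhdsWithin_of_tendsto_nhds (hcont.tendsto 0)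
  have hx_pos : ∀ᶠ τ in 𝓝[>] 0, 0 < x τ := hx.eventually_const_lt hG0
  have hM : Tendsto (fun τ => M τ / τ) (𝓝[>] 0) (𝓝 (-(q / G + 1 / T))) := by
    convert tendsto_vHatLogWeight_div r q σ hT hG0.ne' hx hx_pos using 2
    rw [hGeq]
    field_simp
    ring
  have hM0 : Tendsto M (𝓝[>] 0) (𝓝 0) := by
    have hprod := hM.mul (tendsto_nhdsWithin_of_tendsto_nhds tendsto_id)
    rw [mul_zero] at hprod
    refine hprod.congr' ?_
    filter_upwards [self_mem_nhdsWithin] with τ (hτ : 0 < τ)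
    exact div_mul_cancel₀ _ hτ.ne'
  have hlim := (tendsto_exp_sub_one_div hM0 hM).neg.add
    (((continuous_exp.tendsto 0).comp hM0).mul
      (tendsto_one_sub_stdNormalCDF_div r q hσ hT hG0 hG1 hx))
  rw [exp_zero, mul_zero, add_zero, neg_neg] at hlim
  refine hlim.congr' ?_
  filter_upwards [Ioo_mem_nhdsGT hT, hx_pos] with τ ⟨hτ, hτT⟩ hxτ
  rw [vHatG_eq_neg_exp_mul hT (sub_pos.2 hτT) hxτ]
  simp only [Function.comp_apply, M, x]
  ring
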